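/- For any α ≥ 1 and n ≥ 2, if FFD is monotone with respect to α and n, then FFD is weakly monotone with respect to α and n. -/

import Mathlib

open scoped Classical

noncomputable section

variable {C : Type*} [LinearOrder C]

/-- Total cost of a bundle of chores: the sum of the chore costs. -/
def bundleCost (v : C → ℝ) (B : Finset C) : ℝ := ∑ c ∈ B, v c

/-- The universal ordering is the ambient linear order on `C`, along which costs are
non-increasing; hence the `p`-th largest chore `B[p]` of a bundle `B` (ties broken by the
universal ordering) is the `p`-th element of `B` sorted along the order.
`nthCost v B p` is `v (B[p])` (1-indexed), with the convention `0` for `p > |B|`. -/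
def nthCost (v : C → ℝ) (B : Finset C) (p : ℕ) : ℝ :=
  ((B.sort (· ≤ ·)).map v).getD (p - 1) 0

/-- `B1 =lex B2` : equal cost at each position. -/
def lexEq (v : C → ℝ) (B1 B2 : Finset C) : Prop :=
  ∀ p : ℕ, nthCost v B1 p = nthCost v B2 p

/-- `B1 ≤lex B2`. -/
def lexLe (v : C → ℝ) (B1 B2 : Finset C) : Prop :=
  lexEq v B1 B2 ∨
    ∃ q : ℕ, nthCost v B1 q < nthCost v B2 q ∧ ∀ p < q, nthCost v B1 p = nthCost v B2 p

/-- `B1 <lex B2`. -/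
def lexLt (v : C → ℝ) (B1 B2 : Finset C) : Prop :=
  lexLe v B1 B2 ∧ ¬ lexEq v B1 B2

/-- `(M, v)` is a chore instance for the universal ordering given by the linear order on `C`:
all costs are nonnegative and non-increasing along the ordering. -/
def ChoreOrdered (M : Finset C) (v : C → ℝ) : Prop :=
  (∀ c ∈ M, 0 ≤ v c) ∧ ∀ c ∈ M, ∀ c' ∈ M, c ≤ c' → v c' ≤ v c

/-- `P` is a partition of `M` into `n` (possibly empty) bundles. -/
def IsPartition (M : Finset C) {n : ℕ} (P : Fin n → Finset C) : Prop :=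
  (∀ i, P i ⊆ M) ∧ (∀ i j, i ≠ j → Disjoint (P i) (P j)) ∧ ∀ c ∈ M, ∃ i, c ∈ P i

/-- The maximin share: the minimum over partitions of `M` into `n` bundles of the
maximum bundle cost. -/
def MMS (M : Finset C) (v : C → ℝ) (n : ℕ) : ℝ :=
  sInf {x : ℝ | ∃ P : Fin n → Finset C, IsPartition M P ∧ ∀ i, bundleCost v (P i) ≤ x}

/-- One pass of first-fit: scan the chores in the given list order, adding a chore whenever
the bundle cost stays at most `τ`. -/
def ffdFill (v : C → ℝ) (τ : ℝ) : List C → Finset C → Finset C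
  | [], B => B
  | c :: rest, B =>
      if bundleCost v (insert c B) ≤ τ then ffdFill v τ rest (insert c B)
      else ffdFill v τ rest B

/-- The bundle FFD builds from the remaining chores `R` (scanned from largest to smallest,
i.e. along the linear order on `C`). -/
def ffdBundle (v : C → ℝ) (τ : ℝ) (R : Finset C) : Finset C :=
  ffdFill v τ (R.sort (· ≤ ·)) ∅

/-- The chores remaining after FFD has filled `k` bundles. -/
def ffdRem (M : Finset C) (v : C → ℝ) (τ : ℝ) : ℕ → Finset C
  | 0 => M
  | k + 1 => ffdRem M v τ k \ ffdBundle v τ (ffdRem M v τ k)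

/-- The `(k+1)`-st bundle (0-indexed `k`) output by FFD. -/
def FFDBundle (M : Finset C) (v : C → ℝ) (τ : ℝ) (k : ℕ) : Finset C :=
  ffdBundle v τ (ffdRem M v τ k)

/-- `FFD(M, v, τ, n)` allocates all chores. -/
def FFDAllocatesAll (M : Finset C) (v : C → ℝ) (τ : ℝ) (n : ℕ) : Prop :=
  ffdRem M v τ n = ∅

/-- The union `A_1 ∪ ⋯ ∪ A_{k-1}` of the bundles preceding the `k`-th one (0-indexed). -/
def priorUnion {n : ℕ} (A : Fin n → Finset C) (k : Fin n) : Finset C :=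
  (Finset.univ.filter fun j : Fin n => j < k).biUnion A

/-- `B` is a `k`-th benchmark bundle of the collection `A`: a lexicographically maximal
subset of `M \ (A_1 ∪ ⋯ ∪ A_{k-1})` among subsets of cost at most `τ`. -/
def IsBenchmark (M : Finset C) (v : C → ℝ) (τ : ℝ) {n : ℕ}
    (A : Fin n → Finset C) (k : Fin n) (B : Finset C) : Prop :=
  B ⊆ M \ priorUnion A k ∧ bundleCost v B ≤ τ ∧
    ∀ B' ⊆ M \ priorUnion A k, bundleCost v B' ≤ τ → lexLe v B' B

/-- The tuple `(M, A, v, τ)` is First Fit Valid: `A` consists of pairwise disjoint bundles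
in `M`, `τ ≥ MMS(M, v, n)`, and each `A_k` is lexicographically at least the `k`-th
benchmark bundle. -/
def FirstFitValid (M : Finset C) {n : ℕ} (A : Fin n → Finset C) (v : C → ℝ) (τ : ℝ) : Prop :=
  (∀ k, A k ⊆ M) ∧ (∀ i j, i ≠ j → Disjoint (A i) (A j)) ∧ MMS M v n ≤ τ ∧
    ∀ (k : Fin n) (B : Finset C), IsBenchmark M v τ A k B → lexLe v B (A k)

/-- `c` is the last chore `B[|B|]` of the bundle `B`. -/
def IsLastChore (B : Finset C) (c : C) : Prop := c ∈ B ∧ ∀ c' ∈ B, c' ≤ c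

/-- The fit-in space `fs` of a bundle: `τ` minus the cost of the bundle without its
last chore. -/
def fitSpace (v : C → ℝ) (τ : ℝ) (B : Finset C) : ℝ :=
  if h : B.Nonempty then τ - bundleCost v (B.erase (B.max' h)) else τ

/-- The chore `c = B[p]` of `B` is `x`-redundant: the cost of `{B[1], …, B[p-1]}`
is at least `x`. -/
def Redundant (v : C → ℝ) (x : ℝ) (B : Finset C) (c : C) : Prop :=
  c ∈ B ∧ x ≤ bundleCost v (B.filter fun c' => c' < c)

/-- `A` dominates `B`: there is `f : B → A` with `v(f⁻¹(c')) ≤ v(c')` for every `c' ∈ A`. -/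
def Dominates (v : C → ℝ) (A B : Finset C) : Prop :=
  ∃ f : C → C, (∀ c ∈ B, f c ∈ A) ∧
    ∀ c' ∈ A, bundleCost v (B.filter fun c => f c = c') ≤ v c'

/-- `cnew` is a suitable reduced chore for `cstar` (the excessive chore of `A_k`):
`v(cnew) < v(cstar)` and, running FFD on `M' = (M \ {cstar}) ∪ {cnew}`, the union of the
first `k` output bundles equals `((A_1 ∪ ⋯ ∪ A_k) \ {cstar}) ∪ {cnew}`. -/
def SuitableReduced (M : Finset C) (v : C → ℝ) (τ : ℝ) {n : ℕ}
    (A : Fin n → Finset C) (k : Fin n) (cstar cnew : C) : Prop :=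
  v cnew < v cstar ∧
    (Finset.univ.filter fun j : Fin n => j ≤ k).biUnion
        (fun j => FFDBundle (insert cnew (M.erase cstar)) v τ j.val) =
      insert cnew (((Finset.univ.filter fun j : Fin n => j ≤ k).biUnion A).erase cstar)

/-- The Tidy-Up conditions on the tuple `(M, A, v, τ)`. -/
def TidyUp (M : Finset C) {n : ℕ} (A : Fin n → Finset C) (v : C → ℝ) (τ : ℝ) : Prop :=
  FirstFitValid M A v τ ∧
  (∃ cstar, M \ Finset.univ.biUnion A = {cstar} ∧ ∀ c ∈ M, v cstar ≤ v c) ∧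
  (∀ k, ∀ c ∈ A k, ¬ Redundant v (MMS M v n) (A k) c) ∧
  (∀ c ∈ M, τ - MMS M v n < v c) ∧
  (∀ k, 2 ≤ (A k).card ∧ nthCost v (A k) 1 + nthCost v (A k) 2 < MMS M v n) ∧
  (∃ P : Fin n → Finset C, IsPartition M P ∧
    (∀ j, bundleCost v (P j) ≤ MMS M v n ∧ 3 ≤ (P j).card) ∧
    ∀ k j, ¬ Dominates v (A k) (P j))

/-- One pass of HFFD's first-fit with remaining agents `T`: a chore is added iff some
remaining agent accepts the enlarged bundle. -/
def hffdFill {n : ℕ} (v : Fin n → C → ℝ) (h : Fin n → ℝ) (T : Finset (Fin n)) :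
    List C → Finset C → Finset C
  | [], B => B
  | c :: rest, B =>
      if ∃ i ∈ T, bundleCost (v i) (insert c B) ≤ h i then
        hffdFill v h T rest (insert c B)
      else hffdFill v h T rest B

/-- `(A, assign)` is a run of HFFD on the instance `(M, v)` with thresholds `h`:
bundle `A_k` is built by first-fit over the remaining chores using the remaining agents,
and is assigned to the remaining agent `assign k`, who accepts it. -/
def IsHFFDRun {n : ℕ} (M : Finset C) (v : Fin n → C → ℝ) (h : Fin n → ℝ)
    (A : Fin n → Finset C) (assign : Fin n → Fin n) : Prop :=
  Function.Injective assign ∧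
    ∀ k : Fin n,
      A k = hffdFill v h
          (Finset.univ \ (Finset.univ.filter fun j : Fin n => j < k).image assign)
          ((M \ priorUnion A k).sort (· ≤ ·)) ∅ ∧
      bundleCost (v (assign k)) (A k) ≤ h (assign k)


/-- FFD is monotone with respect to `α` and `n`. -/
def MonotoneFFD (C : Type*) [LinearOrder C] (α : ℝ) (n : ℕ) : Prop :=
  ∀ (M : Finset C) (v : C → ℝ), ChoreOrdered M v →
    FFDAllocatesAll M v (α * MMS M v n) n →
    ∀ A : Fin n → Finset C, FirstFitValid M A v (α * MMS M v n) →
      Finset.univ.biUnion A = M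

/-- FFD is weakly monotone with respect to `α` and `n`. -/
def WeaklyMonotoneFFD (C : Type*) [LinearOrder C] (α : ℝ) (n : ℕ) : Prop :=
  ∀ (M : Finset C) (v : C → ℝ), ChoreOrdered M v →
    FFDAllocatesAll M v (α * MMS M v n) n →
    ∀ β : ℝ, α ≤ β → FFDAllocatesAll M v (β * MMS M v n) n

/-!
Running FFD with a larger threshold `β μ` still yields bundles that are lexicographically
maximal among the subsets of the remaining chores costing at most `β μ`, and a fortiori among
those costing at most `α μ ≤ β μ`. So the FFD allocation at `β μ` is First Fit Valid at
threshold `α μ`, and monotonicity forces it to allocate every chore.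
-/

lemma MMS_nonneg {ι : Type*} {M : Finset ι} {v : ι → ℝ} {n : ℕ} (hv : ∀ c ∈ M, 0 ≤ v c) :
    0 ≤ MMS M v n := by
  rcases Nat.eq_zero_or_pos n with rfl | hn
  · -- with no bundles, the set of admissible maxima is `univ` if `M = ∅` and `∅` otherwise
    rcases M.eq_empty_or_nonempty with rfl | ⟨c, hc⟩
    · simp [MMS, IsPartition]
    · have hM : ¬ ∀ c' : ι, c' ∉ M := fun h => h c hc
      simp [MMS, IsPartition, hM]
  · exact Real.sInf_nonneg fun x ⟨P, hP, hPx⟩ =>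
      (Finset.sum_nonneg fun c hc => hv c (hP.1 _ hc)).trans (hPx ⟨0, hn⟩)

section FirstFit

variable {v : C → ℝ}

lemma ChoreOrdered.mono {M N : Finset C} (h : ChoreOrdered M v) (hNM : N ⊆ M) :
    ChoreOrdered N v :=
  ⟨fun c hc => h.1 c (hNM hc), fun c hc c' hc' => h.2 c (hNM hc) c' (hNM hc')⟩

lemma nthCost_nonneg {B : Finset C} (hv : ∀ c ∈ B, 0 ≤ v c) (p : ℕ) : 0 ≤ nthCost v B p := by
  unfold nthCost
  rcases lt_or_ge (p - 1) ((B.sort (· ≤ ·)).map v).length with hp | hp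
  · rw [List.getD_eq_getElem _ _ hp, List.getElem_map]
    exact hv _ ((Finset.mem_sort _).1 (List.getElem_mem _))
  · rw [List.getD_eq_default _ _ hp]

lemma nthCost_max_one (B : Finset C) (p : ℕ) : nthCost v B (max p 1) = nthCost v B p := by
  unfold nthCost
  congr 1
  omega

lemma nthCost_insert_of_forall_lt {c : C} {B : Finset C} (hc : ∀ x ∈ B, c < x) (p : ℕ) :
    nthCost v (insert c B) p = if p ≤ 1 then v c else nthCost v B (p - 1) := by
  unfold nthCost
  rw [Finset.sort_insert _ (fun x hx => (hc x hx).le) fun hcB => lt_irrefl c (hc c hcB)]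
  rcases p with _ | _ | p <;> simp

lemma lexLe_of_forall_le {B G : Finset C} (h : ∀ p, nthCost v B p ≤ nthCost v G p) :
    lexLe v B G := by
  by_cases he : lexEq v B G
  · exact Or.inl he
  · have hex : ∃ p, nthCost v B p ≠ nthCost v G p := by simpa [lexEq] using he
    exact Or.inr ⟨Nat.find hex, (h _).lt_of_ne (Nat.find_spec hex),
      fun p hp => not_not.1 (Nat.find_min hex hp)⟩

lemma lexLe_empty_left {G : Finset C} (hG : ∀ x ∈ G, 0 ≤ v x) : lexLe v ∅ G :=
  lexLe_of_forall_le fun p => by simpa [nthCost] using nthCost_nonneg hG p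

lemma lexLe_insert_insert {c c' : C} {B G : Finset C} (hv : v c = v c')
    (hcB : ∀ x ∈ B, c < x) (hcG : ∀ x ∈ G, c' < x) (h : lexLe v B G) :
    lexLe v (insert c B) (insert c' G) := by
  rcases h with he | ⟨q, hlt, hpre⟩
  · refine Or.inl fun p => ?_
    rw [nthCost_insert_of_forall_lt hcB, nthCost_insert_of_forall_lt hcG]
    split_ifs
    exacts [hv, he _]
  · refine Or.inr ⟨max q 1 + 1, ?_, fun p hp => ?_⟩
    · rw [nthCost_insert_of_forall_lt hcB, nthCost_insert_of_forall_lt hcG, if_neg (by omega),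
        if_neg (by omega), Nat.add_sub_cancel, nthCost_max_one, nthCost_max_one]
      exact hlt
    · rw [nthCost_insert_of_forall_lt hcB, nthCost_insert_of_forall_lt hcG]
      split_ifs
      exacts [hv, hpre _ (by omega)]

lemma lexLe_insert_insert_of_lt {c c' : C} {B G : Finset C} (hcB : ∀ x ∈ B, c < x)
    (hcG : ∀ x ∈ G, c' < x) (hv : v c < v c') : lexLe v (insert c B) (insert c' G) := by
  refine Or.inr ⟨0, ?_, fun p hp => absurd hp (Nat.not_lt_zero p)⟩
  rw [nthCost_insert_of_forall_lt hcB, nthCost_insert_of_forall_lt hcG]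
  simpa using hv

lemma ffdFill_subset (τ : ℝ) (l : List C) (B : Finset C) :
    ffdFill v τ l B ⊆ B ∪ l.toFinset := by
  induction l generalizing B with
  | nil => simp [ffdFill]
  | cons c rest ih =>
    unfold ffdFill
    split
    all_goals
      refine (ih _).trans fun x => ?_
      simp only [Finset.mem_union, Finset.mem_insert, List.toFinset_cons]
      tauto

lemma ffdFill_insert {c : C} (l : List C) (hcl : c ∉ l) (τ : ℝ) {B : Finset C} (hcB : c ∉ B) :
    ffdFill v τ l (insert c B) = insert c (ffdFill v (τ - v c) l B) := by
  induction l generalizing τ B with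
  | nil => rfl
  | cons x rest ih =>
    obtain ⟨hxc, hcrest⟩ : x ≠ c ∧ c ∉ rest := by simpa [eq_comm] using hcl
    have hcxB : c ∉ insert x B := by simp [hcB, Ne.symm hxc]
    have hfit : bundleCost v (insert x (insert c B)) ≤ τ ↔
        bundleCost v (insert x B) ≤ τ - v c := by
      rw [Finset.insert_comm, bundleCost, Finset.sum_insert hcxB, ← bundleCost]
      constructor <;> intro <;> linarith
    simp only [ffdFill, hfit]
    split
    · rw [Finset.insert_comm, ih hcrest τ hcxB]
    · exact ih hcrest τ hcB

lemma ffdFill_cons_empty_of_le {c : C} {rest : List C} (hc : c ∉ rest) {τ : ℝ}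
    (hcτ : v c ≤ τ) : ffdFill v τ (c :: rest) ∅ = insert c (ffdFill v (τ - v c) rest ∅) := by
  simpa [ffdFill, bundleCost, hcτ] using ffdFill_insert rest hc τ (Finset.notMem_empty c)

-- Exchange argument: the first chore `c` that fits is at least as costly as the largest chore
-- `b` of a competitor `B`; if they tie, trading `b` for `c` reduces to the remaining list.
lemma lexLe_ffdFill (l : List C) (hl : l.Pairwise (· < ·)) (hv : ChoreOrdered l.toFinset v)
    (τ : ℝ) {B : Finset C} (hBl : B ⊆ l.toFinset) (hB : bundleCost v B ≤ τ) :
    lexLe v B (ffdFill v τ l ∅) := by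
  induction l generalizing τ B with
  | nil =>
    obtain rfl : B = ∅ := by simpa using hBl
    exact Or.inl fun _ => rfl
  | cons c rest ih =>
    obtain ⟨hc, hrest⟩ := List.pairwise_cons.1 hl
    have hv' : ChoreOrdered rest.toFinset v := hv.mono (by simp [Finset.subset_insert])
    have hBrest : ∀ x ∈ B, x ≠ c → x ∈ rest.toFinset := fun x hx hxc => by
      simpa [hxc] using hBl hx
    by_cases hcτ : v c ≤ τ
    swap
    · have hcB : c ∉ B := fun hcB =>
        hcτ ((Finset.single_le_sum (fun x hx => hv.1 x (hBl hx)) hcB).trans hB)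
      have hsub : B ⊆ rest.toFinset := fun x hx => hBrest x hx (by rintro rfl; exact hcB hx)
      simpa [ffdFill, bundleCost, hcτ] using ih hrest hv' τ hsub hB
    have hGl : ffdFill v (τ - v c) rest ∅ ⊆ rest.toFinset := by
      simpa using ffdFill_subset (τ - v c) rest ∅
    have hG : ∀ x ∈ ffdFill v (τ - v c) rest ∅, c < x := fun x hx =>
      hc x (List.mem_toFinset.1 (hGl hx))
    rw [ffdFill_cons_empty_of_le (fun h => lt_irrefl c (hc c h)) hcτ]
    rcases B.eq_empty_or_nonempty with rfl | hBne
    · refine lexLe_empty_left fun x hx => hv.1 x ?_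
      rw [List.toFinset_cons]
      exact Finset.insert_subset_insert c hGl hx
    set b := B.min' hBne
    have hb : b ∈ B := B.min'_mem hBne
    have hbB : ∀ x ∈ B.erase b, b < x := fun x => B.min'_lt_of_mem_erase_min' hBne
    have hcb : c ≤ b := by
      rcases List.mem_cons.1 (List.mem_toFinset.1 (hBl hb)) with h | h
      exacts [h.ge, (hc b h).le]
    rw [← Finset.insert_erase hb]
    rcases (hv.2 c (by simp) b (hBl hb) hcb).lt_or_eq with hlt | heq
    · exact lexLe_insert_insert_of_lt hbB hG hlt
    · have hcost : bundleCost v (B.erase b) ≤ τ - v c := by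
        have := Finset.add_sum_erase B v hb
        rw [bundleCost] at hB ⊢
        linarith
      refine lexLe_insert_insert heq hbB hG (ih hrest hv' _ (fun x hx => ?_) hcost)
      exact hBrest x (Finset.mem_of_mem_erase hx) (hcb.trans_lt (hbB x hx)).ne'

lemma ffdBundle_subset (τ : ℝ) (R : Finset C) : ffdBundle v τ R ⊆ R := fun x hx => by
  simpa using ffdFill_subset τ _ ∅ hx

lemma lexLe_ffdBundle {R B : Finset C} (hR : ChoreOrdered R v) {τ : ℝ} (hBR : B ⊆ R)
    (hB : bundleCost v B ≤ τ) : lexLe v B (ffdBundle v τ R) :=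
  lexLe_ffdFill _ (R.sortedLT_sort).pairwise (by rwa [Finset.sort_toFinset]) τ
    (by rwa [Finset.sort_toFinset]) hB

end FirstFit

section Allocation

variable {M : Finset C} {v : C → ℝ} {τ : ℝ} {n : ℕ}

/-- The bundle collection `FFD(M, v, τ, n)`. -/
def ffdAllocation (M : Finset C) (v : C → ℝ) (τ : ℝ) (n : ℕ) : Fin n → Finset C :=
  fun k => FFDBundle M v τ k

lemma ffdRem_eq_sdiff (k : ℕ) :
    ffdRem M v τ k = M \ (Finset.range k).biUnion (FFDBundle M v τ) := by
  induction k with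
  | zero => simp [ffdRem]
  | succ k ih =>
    change ffdRem M v τ k \ FFDBundle M v τ k = _
    rw [ih, Finset.range_add_one, Finset.biUnion_insert, sdiff_sdiff_left, Finset.sup_eq_union,
      Finset.union_comm]

lemma ffdRem_subset (k : ℕ) : ffdRem M v τ k ⊆ M := by
  rw [ffdRem_eq_sdiff]
  exact Finset.sdiff_subset

lemma sdiff_priorUnion_ffdAllocation (k : Fin n) :
    M \ priorUnion (ffdAllocation M v τ n) k = ffdRem M v τ k := by
  rw [ffdRem_eq_sdiff]
  congr 1
  ext x
  simp only [priorUnion, ffdAllocation, Finset.mem_biUnion, Finset.mem_filter,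
    Finset.mem_univ, true_and, Finset.mem_range]
  exact ⟨fun ⟨j, hj, hx⟩ => ⟨j, hj, hx⟩, fun ⟨j, hj, hx⟩ => ⟨⟨j, hj.trans k.isLt⟩, hj, hx⟩⟩

lemma ffdAllocation_subset_ffdRem (k : Fin n) : ffdAllocation M v τ n k ⊆ ffdRem M v τ k :=
  ffdBundle_subset τ _

lemma disjoint_ffdAllocation {i j : Fin n} (hij : i < j) :
    Disjoint (ffdAllocation M v τ n i) (ffdAllocation M v τ n j) := by
  refine Finset.disjoint_left.2 fun x hxi hxj => ?_
  have hx := ffdAllocation_subset_ffdRem j hxj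
  rw [← sdiff_priorUnion_ffdAllocation] at hx
  exact (Finset.mem_sdiff.1 hx).2 (Finset.mem_biUnion.2 ⟨i, by simpa using hij, hxi⟩)

lemma firstFitValid_ffdAllocation (hM : ChoreOrdered M v) {σ : ℝ} (hσ : MMS M v n ≤ σ)
    (hστ : σ ≤ τ) : FirstFitValid M (ffdAllocation M v τ n) v σ := by
  refine ⟨fun k => (ffdAllocation_subset_ffdRem k).trans (ffdRem_subset _), fun i j hij => ?_,
    hσ, fun k B ⟨hBR, hB, _⟩ => ?_⟩
  · rcases hij.lt_or_gt with h | h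
    exacts [disjoint_ffdAllocation h, (disjoint_ffdAllocation h).symm]
  · rw [sdiff_priorUnion_ffdAllocation] at hBR
    exact lexLe_ffdBundle (hM.mono (ffdRem_subset _)) hBR (hB.trans hστ)

lemma ffdAllocatesAll_of_biUnion_ffdAllocation
    (h : Finset.univ.biUnion (ffdAllocation M v τ n) = M) : FFDAllocatesAll M v τ n := by
  rw [FFDAllocatesAll, ffdRem_eq_sdiff, Finset.sdiff_eq_empty_iff_subset]
  conv_lhs => rw [← h]
  intro x hx
  obtain ⟨j, -, hxj⟩ := Finset.mem_biUnion.1 hx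
  exact Finset.mem_biUnion.2 ⟨j, Finset.mem_range.2 j.isLt, hxj⟩

end Allocation

theorem monotone_implies_weakly_monotone_general (α : ℝ) (hα : 1 ≤ α) (n : ℕ)
    (h : MonotoneFFD C α n) : WeaklyMonotoneFFD C α n := by
  intro M v hM hall β hαβ
  have hμ : 0 ≤ MMS M v n := MMS_nonneg hM.1
  exact ffdAllocatesAll_of_biUnion_ffdAllocation <| h M v hM hall _ <|
    firstFitValid_ffdAllocation hM (le_mul_of_one_le_left hμ hα)
      (mul_le_mul_of_nonneg_right hαβ hμ)

/-- for any `α ≥ 1` and `n ≥ 2`, monotonicity of FFD implies weak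
monotonicity of FFD. -/
theorem monotone_implies_weakly_monotone (α : ℝ) (hα : 1 ≤ α) (n : ℕ) (hn : 2 ≤ n)
    (h : MonotoneFFD C α n) : WeaklyMonotoneFFD C α n :=
  monotone_implies_weakly_monotone_general α hα n h

end
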